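/- arXiv:2101.03021 — 2 statements merged into one kernel-verified Lean document; each statement's English description precedes it below -/
import Mathlib

section
/- For every compact set K ⊂ ℂ there exist a constant A > 0 and an integer N such that for all m > N and all s ∈ K, |φ_{m+1}(s) − φ_m(s)| ≤ A·e^{−m}. -/
open Filter

/-- `PhiNest s z n k` is the finite composition
`exp(s - n + exp(s - (n+1) + ⋯ + exp(s - (n+k) + z)⋯))`,
i.e. `Φ_{n, n+k}(s, z)` in the paper's notation. -/
noncomputable def PhiNest (s z : ℂ) : ℕ → ℕ → ℂ
  | n, 0 => Complex.exp (s - (n : ℂ) + z)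
  | n, k + 1 => Complex.exp (s - (n : ℂ) + PhiNest s z (n + 1) k)

/-- `PhiComp s z n m = Φ_{n,m}(s,z)`, the composition of
`z ↦ exp(s - j + z)` for `j = n, …, m` (for `n ≤ m`). -/
noncomputable def PhiComp (s z : ℂ) (n m : ℕ) : ℂ :=
  PhiNest s z n (m - n)

/-- `phiSeq m s = φ_m(s) = Φ_{1,m}(s,0) = exp(s-1+exp(s-2+⋯+exp(s-m)⋯))`. -/
noncomputable def phiSeq (m : ℕ) (s : ℂ) : ℂ :=
  PhiComp s 0 1 m

/-! For `Re s ≤ R` and `n ≥ R + 1`, the map `z ↦ exp (s - n + z)` sends the closed unit disc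
into itself and is `1`-Lipschitz there; hence so is every tail `Φ_{n,m}(s, ·)`. The head
`Φ_{1,n-1}(s, ·)` is a fixed finite composition, Lipschitz on the unit disc with a constant `L`
independent of `s`. Since `φ_{m+1}(s) = Φ_{1,m}(s, e^{s-m-1})` and `φ_m(s) = Φ_{1,m}(s, 0)`, the
difference is at most `L |e^{s-m-1}| ≤ L e^{R-1} e^{-m}`. -/

open Complex Metric Set
open scoped NNReal

lemma lipschitzOnWith_cexp_re_le (M : ℝ) :
    LipschitzOnWith (Real.exp M).toNNReal cexp {z : ℂ | z.re ≤ M} :=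
  (convex_halfSpace_re_le M).lipschitzOnWith_of_nnnorm_deriv_le
    (fun z _ => differentiableAt_exp) fun z hz => by
      rw [Complex.deriv_exp, ← NNReal.coe_le_coe, coe_nnnorm, norm_exp,
        Real.coe_toNNReal _ (Real.exp_pos M).le]
      exact Real.exp_le_exp.2 hz

section Step

variable {s : ℂ} {R : ℝ}

lemma re_sub_natCast_add_le (hs : s.re ≤ R) (n : ℕ) {B : ℝ} {z : ℂ} (hz : z ∈ closedBall 0 B) :
    (s - n + z).re ≤ R - n + B := by
  have : z.re ≤ B := (re_le_norm z).trans (mem_closedBall_zero_iff.1 hz)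
  simp only [add_re, sub_re, natCast_re]
  linarith

lemma mapsTo_cexp_sub_natCast_add (hs : s.re ≤ R) (n : ℕ) (B : ℝ) :
    MapsTo (fun z => cexp (s - n + z)) (closedBall 0 B) (closedBall 0 (Real.exp (R - n + B))) :=
  fun z hz => by
    rw [mem_closedBall_zero_iff, norm_exp]
    exact Real.exp_le_exp.2 (re_sub_natCast_add_le hs n hz)

lemma lipschitzOnWith_cexp_sub_natCast_add (hs : s.re ≤ R) (n : ℕ) (B : ℝ) :
    LipschitzOnWith (Real.exp (R - n + B)).toNNReal (fun z => cexp (s - n + z))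
      (closedBall 0 B) := by
  have hshift : LipschitzOnWith 1 (fun z => s - n + z) (closedBall 0 B) :=
    (isometry_add_left (s - n)).lipschitz.lipschitzOnWith
  simpa only [mul_one, Function.comp_def] using
    (lipschitzOnWith_cexp_re_le (R - n + B)).comp hshift fun z hz => re_sub_natCast_add_le hs n hz

end Step

lemma phiNest_succ_eq_comp (s : ℂ) (n k : ℕ) :
    (PhiNest s · n (k + 1)) = (fun z => cexp (s - n + z)) ∘ (PhiNest s · (n + 1) k) := rfl

lemma phiNest_add_add_one (s z : ℂ) (b : ℕ) : ∀ a n,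
    PhiNest s z n (a + b + 1) = PhiNest s (PhiNest s z (n + a + 1) b) n a := by
  intro a
  induction a with
  | zero => intro n; rw [zero_add, add_zero]; rfl
  | succ a ih =>
    intro n
    rw [show a + 1 + b + 1 = a + b + 1 + 1 by omega, show n + (a + 1) + 1 = n + 1 + a + 1 by omega]
    exact congrArg (fun w => cexp (s - n + w)) (ih (n + 1))

lemma phiSeq_add_two (k : ℕ) (s : ℂ) :
    phiSeq (k + 2) s = PhiNest s (cexp (s - (k + 2 : ℕ))) 1 k := by
  have hinner : PhiNest s 0 (1 + k + 1) 0 = cexp (s - (k + 2 : ℕ)) := by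
    rw [show 1 + k + 1 = k + 2 by omega]
    exact congrArg cexp (add_zero _)
  exact (phiNest_add_add_one s 0 0 k 1).trans (by rw [hinner])

lemma phiSeq_add_one (k : ℕ) (s : ℂ) : phiSeq (k + 1) s = PhiNest s 0 1 k := rfl

lemma exists_mapsTo_lipschitzOnWith_phiNest (R : ℝ) (k : ℕ) : ∀ n : ℕ, ∃ (B : ℝ) (L : ℝ≥0),
    ∀ s : ℂ, s.re ≤ R → MapsTo (PhiNest s · n k) (closedBall 0 1) (closedBall 0 B) ∧
      LipschitzOnWith L (PhiNest s · n k) (closedBall 0 1) := by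
  induction k with
  | zero =>
    exact fun n => ⟨Real.exp (R - n + 1), (Real.exp (R - n + 1)).toNNReal, fun s hs =>
      ⟨mapsTo_cexp_sub_natCast_add hs n 1, lipschitzOnWith_cexp_sub_natCast_add hs n 1⟩⟩
  | succ k ih =>
    intro n
    obtain ⟨B, L, hBL⟩ := ih (n + 1)
    refine ⟨Real.exp (R - n + B), (Real.exp (R - n + B)).toNNReal * L, fun s hs => ?_⟩
    obtain ⟨hmaps, hlip⟩ := hBL s hs
    rw [phiNest_succ_eq_comp]
    exact ⟨(mapsTo_cexp_sub_natCast_add hs n B).comp hmaps,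
      (lipschitzOnWith_cexp_sub_natCast_add hs n B).comp hlip hmaps⟩

lemma mapsTo_lipschitzOnWith_one_phiNest {s : ℂ} {R : ℝ} (hs : s.re ≤ R) (k : ℕ) :
    ∀ n : ℕ, R + 1 ≤ n → MapsTo (PhiNest s · n k) (closedBall 0 1) (closedBall 0 1) ∧
      LipschitzOnWith 1 (PhiNest s · n k) (closedBall 0 1) := by
  have step (n : ℕ) (hn : R + 1 ≤ n) :
      MapsTo (fun z => cexp (s - n + z)) (closedBall 0 1) (closedBall 0 1) ∧
      LipschitzOnWith 1 (fun z => cexp (s - n + z)) (closedBall 0 1) := by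
    have hexp : Real.exp (R - n + 1) ≤ 1 := Real.exp_le_one_iff.2 (by linarith)
    refine ⟨(mapsTo_cexp_sub_natCast_add hs n 1).mono_right (closedBall_subset_closedBall hexp),
      (lipschitzOnWith_cexp_sub_natCast_add hs n 1).weaken ?_⟩
    rwa [Real.toNNReal_le_one]
  induction k with
  | zero => exact step
  | succ k ih =>
    intro n hn
    obtain ⟨hmaps, hlip⟩ := ih (n + 1) (by push_cast; linarith)
    obtain ⟨hmaps', hlip'⟩ := step n hn
    rw [phiNest_succ_eq_comp]
    exact ⟨hmaps'.comp hmaps, by simpa only [mul_one] using hlip'.comp hlip hmaps⟩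

lemma exists_lipschitzOnWith_phiNest_one (R : ℝ) : ∃ L : ℝ≥0, ∀ᶠ k in Filter.atTop,
    ∀ s : ℂ, s.re ≤ R → LipschitzOnWith L (PhiNest s · 1 k) (closedBall 0 1) := by
  set a := ⌈R⌉₊
  obtain ⟨B, L, hhead⟩ := exists_mapsTo_lipschitzOnWith_phiNest R a 1
  refine ⟨L, Filter.eventually_atTop.2 ⟨a + 1, fun k hk s hs => ?_⟩⟩
  obtain ⟨b, rfl⟩ : ∃ b, k = a + b + 1 := ⟨k - a - 1, by omega⟩
  obtain ⟨hmaps, hlip⟩ := mapsTo_lipschitzOnWith_one_phiNest hs b (1 + a + 1)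
    (by push_cast; linarith [Nat.le_ceil R])
  have hsplit : (PhiNest s · 1 (a + b + 1)) = (PhiNest s · 1 a) ∘ (PhiNest s · (1 + a + 1) b) :=
    funext fun z => phiNest_add_add_one s z b a 1
  rw [hsplit]
  simpa only [mul_one] using (hhead s hs).2.comp hlip hmaps

theorem phiSeq_successive_difference_bound (K : Set ℂ) (hK : IsCompact K) :
    ∃ A : ℝ, 0 < A ∧ ∃ N : ℕ, ∀ m : ℕ, N < m → ∀ s ∈ K,
      ‖phiSeq (m + 1) s - phiSeq m s‖ ≤ A * Real.exp (-(m : ℝ)) := by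
  obtain ⟨r, hr⟩ := hK.isBounded.subset_closedBall 0
  have hre : ∀ s ∈ K, s.re ≤ r := fun s hs =>
    (re_le_norm s).trans (mem_closedBall_zero_iff.1 (hr hs))
  obtain ⟨L, hL⟩ := exists_lipschitzOnWith_phiNest_one r
  obtain ⟨N, hN⟩ := Filter.eventually_atTop.1 (hL.and (Filter.eventually_ge_atTop ⌈r⌉₊))
  refine ⟨(L + 1) * Real.exp (r - 1), by positivity, N, fun m hm s hs => ?_⟩
  obtain ⟨k, rfl⟩ : ∃ k, m = k + 1 := ⟨m - 1, by omega⟩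
  obtain ⟨hlip, hrk⟩ := hN k (by omega)
  set w := cexp (s - (k + 2 : ℕ))
  have hw : ‖w‖ ≤ Real.exp (r - (k + 2)) := by
    rw [norm_exp]
    gcongr
    simpa using hre s hs
  have hw1 : w ∈ closedBall 0 1 :=
    mem_closedBall_zero_iff.2 <| hw.trans <| Real.exp_le_one_iff.2 <| by
      linarith [Nat.le_ceil r, (Nat.cast_le (α := ℝ)).2 hrk]
  calc ‖phiSeq (k + 1 + 1) s - phiSeq (k + 1) s‖
      = dist (PhiNest s w 1 k) (PhiNest s 0 1 k) := by
        rw [phiSeq_add_two, phiSeq_add_one, dist_eq_norm]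
    _ ≤ L * ‖w‖ := by
        simpa using (hlip s (hre s hs)).dist_le_mul w hw1 0 (mem_closedBall_self zero_le_one)
    _ ≤ (L + 1) * Real.exp (r - (k + 2)) := by gcongr; exact le_add_of_nonneg_right zero_le_one
    _ = (L + 1) * Real.exp (r - 1) * Real.exp (-((k + 1 : ℕ) : ℝ)) := by
        rw [mul_assoc, ← Real.exp_add]; push_cast; ring_nf
end

section
/- The sequence τ_n converges uniformly on every bounded interval [T, B]; the limit function τ : [T, ∞) → [0, ∞) is continuous and satisfies exp(φ(t) + τ(t)) = φ(t+1) + τ(t+1) for all t ≥ T. -/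
open Filter

/-- The correction terms `τ_n` built from a real function `f` (the restriction
of `φ` to the real line): `τ_0 = 0`, `τ_{n+1}(t) = t + log(1 + τ_n(t+1)/f(t+1))`. -/
noncomputable def tauSeq (f : ℝ → ℝ) : ℕ → ℝ → ℝ
  | 0 => fun _ => 0
  | n + 1 => fun t => t + Real.log (1 + tauSeq f n (t + 1) / f (t + 1))

open Topology

/-!
Write `d_n = τ_{n+1} - τ_n`. Since `log (1 + x)` is `1`-Lipschitz on `[0, ∞)` and the `τ_n` are
nonnegative and increasing in `n`, the recursion gives `d_{n+1}(t) ≤ d_n(t+1) / φ(t+1)`, and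
`φ(t+1) = exp (t + φ t) ≥ exp (t + 1)` for `t ≥ T`. Hence `d_n(t) ≤ (t + 2) (3/4)^n`, so
`τ = ∑ d_n` converges uniformly on bounded intervals (Weierstrass M-test), is continuous as a
locally uniform limit, and passing to the limit in the recursion gives
`τ t = t + log (1 + τ(t+1) / φ(t+1))`, which is the functional equation after exponentiating.
-/

lemma continuous_phiNest (z : ℂ) (k n : ℕ) : Continuous fun s : ℂ => PhiNest s z n k := by
  induction k generalizing n with
  | zero => exact Complex.continuous_exp.comp (by fun_prop)
  | succ k ih =>
    exact Complex.continuous_exp.comp ((continuous_id.sub continuous_const).add (ih (n + 1)))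

lemma continuous_phiSeq (m : ℕ) : Continuous (phiSeq m) :=
  continuous_phiNest 0 (m - 1) 1

lemma continuous_of_tendstoUniformlyOn_phiSeq {φ : ℂ → ℂ}
    (hlim : ∀ K : Set ℂ, IsCompact K → TendstoUniformlyOn (fun m s => phiSeq m s) φ atTop K) :
    Continuous φ :=
  (tendstoLocallyUniformly_iff_forall_isCompact.mpr hlim).continuous
    (Frequently.of_forall (f := atTop) continuous_phiSeq)

lemma real_exp_add_re_eq_re_add_one {φ : ℂ → ℂ} (hfe : ∀ s : ℂ, Complex.exp (s + φ s) = φ (s + 1))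
    (hreal : ∀ t : ℝ, (φ (t : ℂ)).im = 0) (t : ℝ) :
    Real.exp (t + (φ (t : ℂ)).re) = (φ ((t + 1 : ℝ) : ℂ)).re := by
  have hφt : φ (t : ℂ) = ((φ (t : ℂ)).re : ℂ) := Complex.ext rfl (by simp [hreal t])
  rw [Complex.ofReal_add, Complex.ofReal_one, ← hfe]
  conv_rhs => rw [hφt]
  rw [← Complex.ofReal_add, ← Complex.ofReal_exp, Complex.ofReal_re]

lemma continuousOn_Ici_of_tendstoUniformlyOn_Icc {α β ι : Type*} [TopologicalSpace α]
    [LinearOrder α] [OrderTopology α] [NoMaxOrder α] [UniformSpace β] {p : Filter ι} [p.NeBot]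
    {F : ι → α → β} {g : α → β} {a : α} (hF : ∀ i, ContinuousOn (F i) (Set.Ici a))
    (hFg : ∀ b, TendstoUniformlyOn F g p (Set.Icc a b)) :
    ContinuousOn g (Set.Ici a) := by
  refine TendstoLocallyUniformlyOn.continuousOn (p := p)
    (tendstoLocallyUniformlyOn_of_forall_exists_nhds fun x _ => ?_) (Frequently.of_forall hF)
  obtain ⟨b, hxb⟩ := exists_gt x
  refine ⟨Set.Icc a b, ?_, hFg b⟩
  rw [← Set.Ici_inter_Iic]
  exact inter_mem_nhdsWithin _ (Iic_mem_nhds hxb)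

lemma log_one_add_sub_log_one_add_le {a b : ℝ} (ha : 0 ≤ a) (hab : a ≤ b) :
    Real.log (1 + b) - Real.log (1 + a) ≤ b - a := by
  rw [← Real.log_div (by linarith) (by linarith)]
  calc Real.log ((1 + b) / (1 + a)) ≤ (1 + b) / (1 + a) - 1 :=
        Real.log_le_sub_one_of_pos (div_pos (by linarith) (by linarith))
    _ = (b - a) / (1 + a) := by field_simp; ring
    _ ≤ b - a := div_le_self (by linarith) (by linarith)

/-- `τ = lim τ_n`, written as the telescoping series `∑ (τ_{n+1} - τ_n)`. -/
noncomputable def tauLim (f : ℝ → ℝ) (t : ℝ) : ℝ :=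
  ∑' n, (tauSeq f (n + 1) t - tauSeq f n t)

section TauSeq

variable {f : ℝ → ℝ} {T : ℝ}

lemma tauSeq_succ (f : ℝ → ℝ) (n : ℕ) (t : ℝ) :
    tauSeq f (n + 1) t = t + Real.log (1 + tauSeq f n (t + 1) / f (t + 1)) := rfl

lemma tauSeq_nonneg (hT : 0 ≤ T) (hf : ∀ t, T ≤ t → 0 < f (t + 1)) (n : ℕ) :
    ∀ t, T ≤ t → 0 ≤ tauSeq f n t := by
  induction n with
  | zero => intro t _; exact le_rfl
  | succ n ih =>
    intro t ht
    have hlog := Real.log_nonneg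
      (le_add_of_nonneg_right (div_nonneg (ih (t + 1) (by linarith)) (hf t ht).le))
    rw [tauSeq_succ]
    linarith

lemma tauSeq_le_tauSeq_succ (hT : 0 ≤ T) (hf : ∀ t, T ≤ t → 0 < f (t + 1)) (n : ℕ) :
    ∀ t, T ≤ t → tauSeq f n t ≤ tauSeq f (n + 1) t := by
  induction n with
  | zero => intro t ht; simp [tauSeq]; linarith
  | succ n ih =>
    intro t ht
    have ht1 : T ≤ t + 1 := by linarith
    have hlog := Real.log_le_log
      (by linarith [div_nonneg (tauSeq_nonneg hT hf n _ ht1) (hf t ht).le])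
      (add_le_add_right (div_le_div_of_nonneg_right (ih _ ht1) (hf t ht).le) 1)
    rw [tauSeq_succ f (n + 1), tauSeq_succ f n]
    linarith

lemma tauSeq_succ_succ_sub_le (hT : 0 ≤ T) (hf : ∀ t, T ≤ t → 0 < f (t + 1)) (n : ℕ) {t : ℝ}
    (ht : T ≤ t) :
    tauSeq f (n + 2) t - tauSeq f (n + 1) t ≤
      (tauSeq f (n + 1) (t + 1) - tauSeq f n (t + 1)) / f (t + 1) := by
  have ht1 : T ≤ t + 1 := by linarith
  have hlog := log_one_add_sub_log_one_add_le
    (div_nonneg (tauSeq_nonneg hT hf n _ ht1) (hf t ht).le)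
    (div_le_div_of_nonneg_right (tauSeq_le_tauSeq_succ hT hf n _ ht1) (hf t ht).le)
  rw [tauSeq_succ f (n + 1) t, tauSeq_succ f n t, sub_div]
  linarith

lemma tauSeq_succ_sub_le (hT : 0 ≤ T) (hf : ∀ t, T ≤ t → Real.exp (t + 1) ≤ f (t + 1))
    (n : ℕ) : ∀ t, T ≤ t → tauSeq f (n + 1) t - tauSeq f n t ≤ (t + 2) * (3 / 4) ^ n := by
  have hpos : ∀ t, T ≤ t → 0 < f (t + 1) := fun t ht => (Real.exp_pos _).trans_le (hf t ht)
  induction n with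
  | zero => intro t _; simp [tauSeq]
  | succ n ih =>
    intro t ht
    have ht0 : 0 ≤ t := hT.trans ht
    have hexp : t + 2 ≤ Real.exp (t + 1) := by linarith [Real.add_one_le_exp (t + 1)]
    have hratio : t + 3 ≤ 3 / 4 * (t + 2) * Real.exp (t + 1) := by nlinarith
    calc tauSeq f (n + 2) t - tauSeq f (n + 1) t
        ≤ (tauSeq f (n + 1) (t + 1) - tauSeq f n (t + 1)) / f (t + 1) :=
          tauSeq_succ_succ_sub_le hT hpos n ht
      _ ≤ (t + 1 + 2) * (3 / 4) ^ n / Real.exp (t + 1) :=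
          div_le_div₀ (by positivity) (ih _ (by linarith)) (Real.exp_pos _) (hf t ht)
      _ ≤ (t + 2) * (3 / 4) ^ (n + 1) := by
          rw [div_le_iff₀ (Real.exp_pos _), pow_succ]
          nlinarith [pow_pos (by norm_num : (0 : ℝ) < 3 / 4) n]

lemma tendstoUniformlyOn_tauSeq (hT : 0 ≤ T)
    (hf : ∀ t, T ≤ t → Real.exp (t + 1) ≤ f (t + 1)) (B : ℝ) :
    TendstoUniformlyOn (tauSeq f) (tauLim f) atTop (Set.Icc T B) := by
  have hpos : ∀ t, T ≤ t → 0 < f (t + 1) := fun t ht => (Real.exp_pos _).trans_le (hf t ht)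
  have hsum : Summable fun n : ℕ => (B + 2) * (3 / 4 : ℝ) ^ n :=
    (summable_geometric_of_lt_one (by norm_num) (by norm_num)).mul_left _
  have hbound : ∀ n, ∀ t ∈ Set.Icc T B,
      ‖tauSeq f (n + 1) t - tauSeq f n t‖ ≤ (B + 2) * (3 / 4) ^ n := by
    intro n t ht
    rw [Real.norm_of_nonneg (sub_nonneg.2 (tauSeq_le_tauSeq_succ hT hpos n t ht.1))]
    calc tauSeq f (n + 1) t - tauSeq f n t ≤ (t + 2) * (3 / 4) ^ n :=
          tauSeq_succ_sub_le hT hf n t ht.1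
      _ ≤ (B + 2) * (3 / 4) ^ n := by gcongr; exact ht.2
  have hpartial : (fun N t => ∑ n ∈ Finset.range N, (tauSeq f (n + 1) t - tauSeq f n t)) =
      tauSeq f := by
    ext N t
    rw [Finset.sum_range_sub (fun n => tauSeq f n t)]
    simp [tauSeq]
  rw [← hpartial]
  exact tendstoUniformlyOn_tsum_nat hsum hbound

lemma continuousOn_tauSeq (hT : 0 ≤ T) (hf : ∀ t, T ≤ t → 0 < f (t + 1))
    (hfc : ContinuousOn f (Set.Ici T)) (n : ℕ) : ContinuousOn (tauSeq f n) (Set.Ici T) := by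
  have hshift : Set.MapsTo (· + 1) (Set.Ici T) (Set.Ici T) := fun t (ht : T ≤ t) =>
    show T ≤ t + 1 by linarith
  have hshiftc : ContinuousOn (· + 1 : ℝ → ℝ) (Set.Ici T) := by fun_prop
  induction n with
  | zero => exact continuousOn_const
  | succ n ih =>
    refine continuousOn_id.add (ContinuousOn.log (continuousOn_const.add
      ((ih.comp hshiftc hshift).div (hfc.comp hshiftc hshift) fun t ht => (hf t ht).ne'))
      fun t (ht : T ≤ t) => ?_)
    have := div_nonneg (tauSeq_nonneg hT hf n (t + 1) (by linarith)) (hf t ht).le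
    exact (show (0 : ℝ) < 1 + _ by linarith).ne'

lemma continuousOn_tauLim (hT : 0 ≤ T) (hf : ∀ t, T ≤ t → Real.exp (t + 1) ≤ f (t + 1))
    (hfc : ContinuousOn f (Set.Ici T)) : ContinuousOn (tauLim f) (Set.Ici T) :=
  continuousOn_Ici_of_tendstoUniformlyOn_Icc
    (continuousOn_tauSeq hT (fun t ht => (Real.exp_pos _).trans_le (hf t ht)) hfc)
    (tendstoUniformlyOn_tauSeq hT hf)

lemma tauLim_nonneg (hT : 0 ≤ T) (hf : ∀ t, T ≤ t → 0 < f (t + 1)) {t : ℝ} (ht : T ≤ t) :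
    0 ≤ tauLim f t :=
  tsum_nonneg fun n => sub_nonneg.2 (tauSeq_le_tauSeq_succ hT hf n t ht)

lemma one_add_tauLim_div_pos (hT : 0 ≤ T) (hf : ∀ t, T ≤ t → 0 < f (t + 1)) {t : ℝ}
    (ht : T ≤ t) : 0 < 1 + tauLim f (t + 1) / f (t + 1) := by
  have := div_nonneg (tauLim_nonneg hT hf (show T ≤ t + 1 by linarith)) (hf t ht).le
  linarith

lemma tauLim_eq (hT : 0 ≤ T) (hf : ∀ t, T ≤ t → Real.exp (t + 1) ≤ f (t + 1)) {t : ℝ}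
    (ht : T ≤ t) : tauLim f t = t + Real.log (1 + tauLim f (t + 1) / f (t + 1)) := by
  have hpos : ∀ t, T ≤ t → 0 < f (t + 1) := fun t ht => (Real.exp_pos _).trans_le (hf t ht)
  have htendsto : ∀ s, T ≤ s → Tendsto (tauSeq f · s) atTop (𝓝 (tauLim f s)) := fun s hs =>
    (tendstoUniformlyOn_tauSeq hT hf s).tendsto_at ⟨hs, le_rfl⟩
  refine tendsto_nhds_unique ((htendsto t ht).comp (tendsto_add_atTop_nat 1)) ?_
  exact tendsto_const_nhds.add ((((htendsto (t + 1) (by linarith)).div_const _).const_add 1).log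
    (one_add_tauLim_div_pos hT hpos ht).ne')

lemma exp_add_tauLim (hT : 0 ≤ T) (hf : ∀ t, T ≤ t → Real.exp (t + 1) ≤ f (t + 1)) {t : ℝ}
    (ht : T ≤ t) (hrec : Real.exp (t + f t) = f (t + 1)) :
    Real.exp (f t + tauLim f t) = f (t + 1) + tauLim f (t + 1) := by
  have hpos : ∀ t, T ≤ t → 0 < f (t + 1) := fun t ht => (Real.exp_pos _).trans_le (hf t ht)
  rw [tauLim_eq hT hf ht, ← add_assoc, add_comm (f t), Real.exp_add, hrec,
    Real.exp_log (one_add_tauLim_div_pos hT hpos ht)]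
  field_simp [(hpos t ht).ne']

end TauSeq

theorem tauSeq_tendstoUniformly_exists_tau_general (φ : ℂ → ℂ)
    (hlim : ∀ K : Set ℂ, IsCompact K →
      TendstoUniformlyOn (fun m s => phiSeq m s) φ atTop K)
    (hfe : ∀ s : ℂ, Complex.exp (s + φ s) = φ (s + 1))
    (hreal : ∀ t : ℝ, (φ (t : ℂ)).im = 0)
    (T : ℝ) (hT : 0 ≤ T) (hT1 : ∀ t : ℝ, T ≤ t → 1 < (φ (t : ℂ)).re) :
    ∃ τ : ℝ → ℝ,
      (∀ B : ℝ, TendstoUniformlyOn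
        (fun n t => tauSeq (fun u : ℝ => (φ (u : ℂ)).re) n t) τ atTop
        (Set.Icc T B)) ∧
      ContinuousOn τ (Set.Ici T) ∧
      (∀ t : ℝ, T ≤ t → 0 ≤ τ t) ∧
      (∀ t : ℝ, T ≤ t →
        Real.exp ((φ (t : ℂ)).re + τ t) = (φ ((t + 1 : ℝ) : ℂ)).re + τ (t + 1)) := by
  set f : ℝ → ℝ := fun u => (φ (u : ℂ)).re
  have hrec : ∀ t, Real.exp (t + f t) = f (t + 1) := real_exp_add_re_eq_re_add_one hfe hreal
  have hgrow : ∀ t, T ≤ t → Real.exp (t + 1) ≤ f (t + 1) := fun t ht =>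
    hrec t ▸ Real.exp_le_exp.2 (by linarith [hT1 t ht])
  have hfc : Continuous f := Complex.continuous_re.comp
    ((continuous_of_tendstoUniformlyOn_phiSeq hlim).comp Complex.continuous_ofReal)
  exact ⟨tauLim f, tendstoUniformlyOn_tauSeq hT hgrow,
    continuousOn_tauLim hT hgrow hfc.continuousOn,
    fun t ht => tauLim_nonneg hT (fun s hs => (Real.exp_pos _).trans_le (hgrow s hs)) ht,
    fun t ht => exp_add_tauLim hT hgrow ht (hrec t)⟩

theorem tauSeq_tendstoUniformly_exists_tau (φ : ℂ → ℂ)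
    (hlim : ∀ K : Set ℂ, IsCompact K →
      TendstoUniformlyOn (fun m s => phiSeq m s) φ atTop K)
    (hfe : ∀ s : ℂ, Complex.exp (s + φ s) = φ (s + 1))
    (hreal : ∀ t : ℝ, (φ (t : ℂ)).im = 0)
    (hpos : ∀ t : ℝ, 0 < (φ (t : ℂ)).re)
    (hmono : StrictMono (fun t : ℝ => (φ (t : ℂ)).re))
    (htop : Tendsto (fun t : ℝ => (φ (t : ℂ)).re) atTop atTop)
    (T : ℝ) (hT : 0 ≤ T) (hT1 : ∀ t : ℝ, T ≤ t → 1 < (φ (t : ℂ)).re) :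
    ∃ τ : ℝ → ℝ,
      (∀ B : ℝ, TendstoUniformlyOn
        (fun n t => tauSeq (fun u : ℝ => (φ (u : ℂ)).re) n t) τ atTop
        (Set.Icc T B)) ∧
      ContinuousOn τ (Set.Ici T) ∧
      (∀ t : ℝ, T ≤ t → 0 ≤ τ t) ∧
      (∀ t : ℝ, T ≤ t →
        Real.exp ((φ (t : ℂ)).re + τ t) = (φ ((t + 1 : ℝ) : ℂ)).re + τ (t + 1)) :=
  tauSeq_tendstoUniformly_exists_tau_general φ hlim hfe hreal T hT hT1
end
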